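/- For real α, β > 0 and parameters a₁, a₂, b₁ (with b₁ not a non-positive integer), define the hypergeometric–Mittag-Leffler function ₂F₁E_{(α,β)}(a₁,a₂;b₁;u) = Σ_{r=0}^∞ (a₁)_r (a₂)_r / ((b₁)_r Γ(αr+β)) u^r. Then for β > α, one has ₂F₁E_{(α,β−α)}(a₁,a₂;b₁;u) = (u a₁ a₂ / b₁) · ₂F₁E_{(α,β)}(a₁+1, a₂+1; b₁+1; u) + 1/Γ(β−α), whenever the series converge (e.g. |u| < 1). -/
import Mathlib


open Real

/-- Pochhammer (rising factorial) on the reals. -/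
noncomputable def poch (a : ℝ) (r : ℕ) : ℝ := (ascPochhammer ℝ r).eval a

/-- The hypergeometric–Mittag-Leffler coefficient. -/
noncomputable def hmlCoeff (α β a₁ a₂ b₁ : ℝ) (r : ℕ) : ℝ :=
  poch a₁ r * poch a₂ r / (poch b₁ r * Real.Gamma (α * r + β))

lemma poch_succ (a : ℝ) (r : ℕ) : poch a (r + 1) = a * poch (a + 1) r := by
  simp [poch, ascPochhammer_succ_left, Polynomial.eval_comp]

lemma key (α β a₁ a₂ b₁ u : ℝ) (r : ℕ) :
    hmlCoeff α (β - α) a₁ a₂ b₁ (r + 1) * u ^ (r + 1) =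
      u * a₁ * a₂ / b₁ * (hmlCoeff α β (a₁ + 1) (a₂ + 1) (b₁ + 1) r * u ^ r) := by
  have h : α * (↑(r + 1) : ℝ) + (β - α) = α * r + β := by push_cast; ring
  simp only [hmlCoeff, poch_succ, h, pow_succ, div_eq_mul_inv, mul_inv]
  ring

theorem hml_shift (α β a₁ a₂ b₁ u : ℝ) (hα : 0 < α) (hβ : 0 < β) (hβα : α < β)
    (hb : ∀ n : ℕ, b₁ ≠ -n)
    (h1 : Summable (fun r : ℕ => hmlCoeff α (β - α) a₁ a₂ b₁ r * u ^ r))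
    (h2 : Summable (fun r : ℕ => hmlCoeff α β (a₁ + 1) (a₂ + 1) (b₁ + 1) r * u ^ r)) :
    ∑' r : ℕ, hmlCoeff α (β - α) a₁ a₂ b₁ r * u ^ r =
      u * a₁ * a₂ / b₁ *
        ∑' r : ℕ, hmlCoeff α β (a₁ + 1) (a₂ + 1) (b₁ + 1) r * u ^ r
      + 1 / Real.Gamma (β - α) := by
  rw [Summable.tsum_eq_zero_add h1]
  have h0 : hmlCoeff α (β - α) a₁ a₂ b₁ 0 * u ^ 0 = 1 / Real.Gamma (β - α) := by
    simp [hmlCoeff, poch]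
  rw [h0, add_comm]
  congr 1
  calc ∑' r : ℕ, hmlCoeff α (β - α) a₁ a₂ b₁ (r + 1) * u ^ (r + 1)
      = ∑' r : ℕ, u * a₁ * a₂ / b₁ * (hmlCoeff α β (a₁ + 1) (a₂ + 1) (b₁ + 1) r * u ^ r) := by
        exact tsum_congr fun r => key α β a₁ a₂ b₁ u r
    _ = _ := tsum_mul_left
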